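/- arXiv:math/0306006 — 2 statements merged into one kernel-verified Lean document; each statement's English description precedes it below -/
import Mathlib

section
/- For every real number R ≥ 0 and all angles φ₁, φ₂ ∈ [0, π] with φ₁ + φ₂ ≤ π, one has (1/(2π − φ₁ − φ₂)) ∫_{φ₂}^{2π−φ₁} ‖(R,0) − (cos φ, sin φ)‖ dφ ≥ R + (sin φ₁ + sin φ₂)/(2π). -/
open Real

/-- For every `R ≥ 0` and angles `φ₁, φ₂ ∈ [0, π]` with `φ₁ + φ₂ ≤ π`,
`(1/(2π − φ₁ − φ₂)) ∫_{φ₂}^{2π−φ₁} ‖(R,0) − (cos φ, sin φ)‖ dφ ≥ R + (sin φ₁ + sin φ₂)/(2π)`. -/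
theorem stmt_0 (R φ₁ φ₂ : ℝ) (hR : 0 ≤ R)
    (h1 : φ₁ ∈ Set.Icc 0 π) (h2 : φ₂ ∈ Set.Icc 0 π) (hsum : φ₁ + φ₂ ≤ π) :
    (1 / (2 * π - φ₁ - φ₂)) *
      ∫ φ in φ₂..(2 * π - φ₁), Real.sqrt ((R - Real.cos φ) ^ 2 + (Real.sin φ) ^ 2)
      ≥ R + (Real.sin φ₁ + Real.sin φ₂) / (2 * π) := by
  obtain ⟨h1a, h1b⟩ := h1
  obtain ⟨h2a, h2b⟩ := h2
  have hpi := Real.pi_pos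
  have hLpos : 0 < 2 * π - φ₁ - φ₂ := by linarith
  have hle : φ₂ ≤ 2 * π - φ₁ := by linarith
  have hs1 : 0 ≤ Real.sin φ₁ := Real.sin_nonneg_of_nonneg_of_le_pi h1a h1b
  have hs2 : 0 ≤ Real.sin φ₂ := Real.sin_nonneg_of_nonneg_of_le_pi h2a h2b
  -- pointwise lower bound
  have hpt : ∀ φ : ℝ, R - Real.cos φ ≤
      Real.sqrt ((R - Real.cos φ) ^ 2 + (Real.sin φ) ^ 2) := by
    intro φ
    calc R - Real.cos φ ≤ |R - Real.cos φ| := le_abs_self _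
    _ = Real.sqrt ((R - Real.cos φ) ^ 2) := (Real.sqrt_sq_eq_abs _).symm
    _ ≤ _ := Real.sqrt_le_sqrt (by nlinarith [sq_nonneg (Real.sin φ)])
  -- integral of lower bound
  have hI1 : ∫ φ in φ₂..(2 * π - φ₁), (R - Real.cos φ)
      = R * (2 * π - φ₁ - φ₂) + (Real.sin φ₁ + Real.sin φ₂) := by
    rw [intervalIntegral.integral_sub intervalIntegrable_const
      (Continuous.intervalIntegrable Real.continuous_cos _ _),
      intervalIntegral.integral_const, integral_cos, Real.sin_sub]
    simp [smul_eq_mul]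
    ring
  have hint : (R * (2 * π - φ₁ - φ₂) + (Real.sin φ₁ + Real.sin φ₂)) ≤
      ∫ φ in φ₂..(2 * π - φ₁), Real.sqrt ((R - Real.cos φ) ^ 2 + (Real.sin φ) ^ 2) := by
    rw [← hI1]
    apply intervalIntegral.integral_mono_on hle
    · exact Continuous.intervalIntegrable (by continuity) _ _
    · exact Continuous.intervalIntegrable (by continuity) _ _
    · intro x _; exact hpt x
  have h2pi : 0 < 2 * π := by linarith
  have hdiv : (Real.sin φ₁ + Real.sin φ₂) / (2 * π) ≤
      (Real.sin φ₁ + Real.sin φ₂) / (2 * π - φ₁ - φ₂) :=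
    div_le_div_of_nonneg_left (by linarith) hLpos (by linarith)
  have key : R + (Real.sin φ₁ + Real.sin φ₂) / (2 * π - φ₁ - φ₂) ≤
      (1 / (2 * π - φ₁ - φ₂)) *
        ∫ φ in φ₂..(2 * π - φ₁), Real.sqrt ((R - Real.cos φ) ^ 2 + (Real.sin φ) ^ 2) := by
    have := mul_le_mul_of_nonneg_left hint (le_of_lt (one_div_pos.mpr hLpos))
    calc R + (Real.sin φ₁ + Real.sin φ₂) / (2 * π - φ₁ - φ₂)
        = (1 / (2 * π - φ₁ - φ₂)) * (R * (2 * π - φ₁ - φ₂) + (Real.sin φ₁ + Real.sin φ₂)) := by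
          field_simp
      _ ≤ _ := this
  linarith
end

section
/- Let β = 1 + 4π√8, γ = 1/(2β), d > 0 and x, y ∈ [0, γd]. Then y + β(√((d/2 − x)² + y²) − d/2) ≤ 2(y − x). -/
open Real

/-- With `β = 1 + 4π√8` and `γ = 1/(2β)`, for `d > 0` and `x, y ∈ [0, γd]`,
`y + β(√((d/2 − x)² + y²) − d/2) ≤ 2(y − x)`. -/
theorem stmt_5 (β γ d x y : ℝ)
    (hβ : β = 1 + 4 * π * Real.sqrt 8) (hγ : γ = 1 / (2 * β))
    (hd : 0 < d) (hx : x ∈ Set.Icc 0 (γ * d)) (hy : y ∈ Set.Icc 0 (γ * d)) :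
    y + β * (Real.sqrt ((d / 2 - x) ^ 2 + y ^ 2) - d / 2) ≤ 2 * (y - x) := by
  obtain ⟨hx0, hx1⟩ := hx
  obtain ⟨hy0, hy1⟩ := hy
  have hs8 : (2 : ℝ) ≤ Real.sqrt 8 := by
    nlinarith [Real.sq_sqrt (by norm_num : (8:ℝ) ≥ 0), Real.sqrt_nonneg 8]
  have hπ3 : (3 : ℝ) < π := Real.pi_gt_three
  have hβ2 : (2 : ℝ) ≤ β := by nlinarith
  have hβ0 : (0 : ℝ) < β := by linarith
  have hγd : γ * d = d / (2 * β) := by rw [hγ]; ring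
  have hx2 : x ≤ d / (2 * β) := by rwa [hγd] at hx1
  have hy2 : y ≤ d / (2 * β) := by rwa [hγd] at hy1
  have hxd : x ≤ d / 4 := by
    have : d / (2 * β) ≤ d / 4 := by
      apply div_le_div_of_nonneg_left hd.le (by norm_num) (by linarith)
    linarith
  set a := d / 2 - x with ha_def
  have ha : 0 < a := by simp only [ha_def]; linarith
  have hβy : β * y ≤ 2 * a := by
    have : β * y ≤ β * (d / (2 * β)) := by nlinarith
    have h2 : β * (d / (2 * β)) = d / 2 := by field_simp
    simp only [ha_def]; nlinarith
  have hsqrt : Real.sqrt (a ^ 2 + y ^ 2) ≤ a + y ^ 2 / (2 * a) := by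
    rw [show a + y ^ 2 / (2 * a) = Real.sqrt ((a + y ^ 2 / (2 * a)) ^ 2) from
      (Real.sqrt_sq (by positivity)).symm]
    apply Real.sqrt_le_sqrt
    have h4 : (0:ℝ) < 2 * a := by linarith
    have : (a + y ^ 2 / (2 * a)) ^ 2 = a ^ 2 + y ^ 2 + (y ^ 2 / (2 * a)) ^ 2 := by
      field_simp; ring
    nlinarith [sq_nonneg (y ^ 2 / (2 * a))]
  have hcorr : β * (y ^ 2 / (2 * a)) ≤ y := by
    calc β * (y ^ 2 / (2 * a)) = (β * y) * y / (2 * a) := by ring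
    _ ≤ (2 * a) * y / (2 * a) := by
        apply div_le_div_of_nonneg_right _ (by linarith)
        nlinarith
    _ = y := by field_simp
  nlinarith [mul_le_mul_of_nonneg_left hsqrt hβ0.le]
end
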